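/- Let (l_n) and (k_n) be sequences of positive integers such that (1 − 2^{−l_n})^{k_n} → 1 and k_n · l_n · 2^{−l_n} → ∞. Let h_n : {-1,1}^{[k_n]×[l_n]} → {−1,1} be any sequence of monotone increasing Boolean functions. Then there exists a sequence of monotone increasing Boolean functions g_n : {-1,1}^{[k_n]×[l_n]} → {−1,1} such that ℙ[g_n(ω) ≠ h_n(ω)] → 0 as n → ∞ (with ω uniform), and there exists a sequence of positive integers a_n → ∞ with ℙ[|𝒫(g_n, ω)| > a_n] → 1 as n → ∞. -/

import Mathlib

open Finset Filter

attribute [local instance] Classical.propDecidable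

/-- The discrete hypercube indexed by `ι`: `true` encodes `+1`, `false` encodes `-1`
(so the pointwise `Bool` order, with `false < true`, is the coordinatewise partial
order on `{-1,1}^ι` with `-1 < 1`). -/
abbrev Cube (ι : Type) := ι → Bool

/-- `ω` with its `i`-th coordinate flipped. -/
def flipAt {ι : Type} [DecidableEq ι] (ω : Cube ι) (i : ι) : Cube ι :=
  fun j => if j = i then !ω j else ω j

/-- The pivotal set `𝒫(f, ω)`: coordinates whose flip changes the value of `f`. -/
noncomputable def pivSet {ι : Type} [DecidableEq ι] [Fintype ι] {β : Type}
    (f : Cube ι → β) (ω : Cube ι) : Finset ι :=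
  Finset.univ.filter fun i => f (flipAt ω i) ≠ f ω

/-- Probability of the event `p` under the uniform measure on the hypercube. -/
noncomputable def unifProb {ι : Type} [DecidableEq ι] [Fintype ι] (p : Cube ι → Prop) : ℝ :=
  ((Finset.univ.filter p).card : ℝ) / (Fintype.card (Cube ι) : ℝ)

/-- Expectation of `X` under the uniform measure on the hypercube. -/
noncomputable def unifExp {ι : Type} [DecidableEq ι] [Fintype ι] (X : Cube ι → ℝ) : ℝ :=
  (∑ ω : Cube ι, X ω) / (Fintype.card (Cube ι) : ℝ)

/-- Conditional expectation of `X` given the event `A`, under the uniform measure. -/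
noncomputable def condExpect {ι : Type} [DecidableEq ι] [Fintype ι]
    (X : Cube ι → ℝ) (A : Cube ι → Prop) : ℝ :=
  (∑ ω ∈ Finset.univ.filter A, X ω) / ((Finset.univ.filter A).card : ℝ)

/-- `Tribes(l,k)` as a `{0,1}`-valued integer function on `{-1,1}^{[k]×[l]}`:
value `1` iff some tribe `t ∈ [k]` has all of its `l` bits equal to `+1` (`true`). -/
noncomputable def tribes (k l : ℕ) (ω : Cube (Fin k × Fin l)) : ℤ :=
  if ∃ t : Fin k, ∀ i : Fin l, ω (t, i) = true then 1 else 0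

/-- Coordinatewise negation `-ω`. -/
def negCube {ι : Type} (ω : Cube ι) : Cube ι := fun x => !ω x

/-- The number of pivotal tribes: tribes having exactly one `-1` (`false`) bit. -/
noncomputable def pivTribeCount (k l : ℕ) (ω : Cube (Fin k × Fin l)) : ℕ :=
  (Finset.univ.filter fun t : Fin k => ∃! i : Fin l, ω (t, i) = false).card

/-- Single-coordinate weight of the `ε`-noise joint distribution `ν_ε`. -/
noncomputable def noiseWeight (ε : ℝ) (b b' : Bool) : ℝ :=
  if b = b' then (1 - ε / 2) / 2 else ε / 4

/-- Probability of the event `E` under the `ε`-noise joint distribution `ν_ε`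
(the product over coordinates of the single-coordinate weights). -/
noncomputable def noiseProb {ι : Type} [DecidableEq ι] [Fintype ι] (ε : ℝ)
    (E : Cube ι → Cube ι → Prop) : ℝ :=
  ∑ ω : Cube ι, ∑ ω' : Cube ι,
    if E ω ω' then ∏ i : ι, noiseWeight ε (ω i) (ω' i) else 0

/-- `f` is transitive: it is invariant under some subgroup of permutations of the
coordinate set acting transitively, where `(σ · ω) x = ω (σ⁻¹ x)`. -/
def TransitiveInvariant {ι : Type} {β : Type} (f : Cube ι → β) : Prop :=
  ∃ G : Subgroup (Equiv.Perm ι),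
    (∀ x y : ι, ∃ σ ∈ G, σ x = y) ∧
    ∀ σ ∈ G, ∀ ω : Cube ι, f (fun x => ω (σ⁻¹ x)) = f ω

/-!
Modify `h` where some tribe is constant: `g = -1` if some tribe is all `-1`, otherwise `g = +1`
if some tribe is all `+1`, otherwise `g = h`. This `g` is monotone and differs from `h` with
probability at most `2 (1 - (1 - 2^{-l})^k) → 0`.

When no tribe is all `-1`, every tribe with exactly one `-1` bit carries a pivotal coordinate of
`g` at `ω` if `g ω = -1` (flipping that bit creates an all-`+1` tribe), and every tribe with
exactly one `+1` bit carries one if `g ω = +1`. Each tribe has exactly one `-1` bit with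
probability `p = l 2^{-l}`, independently. Cutting the tribes into `G` blocks of `⌊k / G⌋`
tribes, fewer than `G` such tribes force a block without any, which has probability at most
`G (1 - p)^{⌊k/G⌋} ≤ G² / (k p)`; this tends to `0` for `G ≈ (k p)^{1/4} → ∞`.
-/

lemma negCube_negCube {ι : Type} (ω : Cube ι) : negCube (negCube ω) = ω :=
  funext fun x => Bool.not_not (ω x)

lemma flipAt_self {ι : Type} [DecidableEq ι] (ω : Cube ι) (x : ι) : flipAt ω x x = !ω x :=
  if_pos rfl

lemma flipAt_of_ne {ι : Type} [DecidableEq ι] (ω : Cube ι) {x y : ι} (h : y ≠ x) :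
    flipAt ω x y = ω y :=
  if_neg h

section UnifProb

variable {ι : Type} [DecidableEq ι] [Fintype ι]

lemma unifProb_nonneg (p : Cube ι → Prop) : 0 ≤ unifProb p := by
  unfold unifProb; positivity

lemma unifProb_congr {p q : Cube ι → Prop} (h : ∀ ω, p ω ↔ q ω) : unifProb p = unifProb q := by
  obtain rfl : p = q := funext fun ω => propext (h ω)
  rfl

lemma unifProb_mono {p q : Cube ι → Prop} (h : ∀ ω, p ω → q ω) : unifProb p ≤ unifProb q := by
  unfold unifProb
  gcongr
  exact h _

lemma unifProb_or_le (p q : Cube ι → Prop) :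
    unifProb (fun ω => p ω ∨ q ω) ≤ unifProb p + unifProb q := by
  unfold unifProb
  rw [← add_div]
  gcongr
  exact_mod_cast (card_le_card fun ω => by simp).trans (card_union_le _ _)

lemma unifProb_exists_le {γ : Type} (s : Finset γ) (p : γ → Cube ι → Prop) :
    unifProb (fun ω => ∃ g ∈ s, p g ω) ≤ ∑ g ∈ s, unifProb (p g) := by
  unfold unifProb
  rw [← sum_div]
  gcongr
  exact_mod_cast (card_le_card fun ω => by simp).trans card_biUnion_le

lemma unifProb_not (p : Cube ι → Prop) : unifProb (fun ω => ¬ p ω) = 1 - unifProb p := by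
  unfold unifProb
  have hcard : 0 < (Fintype.card (Cube ι) : ℝ) := by exact_mod_cast Fintype.card_pos
  rw [eq_sub_iff_add_eq, ← add_div, div_eq_one_iff_eq hcard.ne', ← card_univ, add_comm]
  exact_mod_cast (Eq.trans (by congr!) (card_filter_add_card_filter_not (s := univ) p))

lemma unifProb_comp_negCube (p : Cube ι → Prop) :
    unifProb (fun ω => p (negCube ω)) = unifProb p := by
  unfold unifProb
  congr 2
  exact card_nbij' negCube negCube (fun ω hω => by simpa using hω)
    (fun ω hω => by simpa [negCube_negCube] using hω)
    (fun ω _ => negCube_negCube ω) (fun ω _ => negCube_negCube ω)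

end UnifProb

section Rows

variable {α β : Type} [DecidableEq α] [Fintype α] [DecidableEq β] [Fintype β]

lemma unifProb_forall_row_mem (S : α → Finset (β → Bool)) :
    unifProb (fun ω : Cube (α × β) => ∀ t, (fun i => ω (t, i)) ∈ S t)
      = ∏ t, (#(S t) : ℝ) / 2 ^ Fintype.card β := by
  have hcount : #(univ.filter fun ω : Cube (α × β) => ∀ t, (fun i => ω (t, i)) ∈ S t)
      = #(Fintype.piFinset S) :=
    card_nbij' (fun ω t i => ω (t, i)) (fun f x => f x.1 x.2) (fun ω hω => by simpa using hω)
      (fun f hf => by simpa using hf) (fun _ _ => rfl) (fun _ _ => rfl)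
  rw [unifProb, filter_congr_decidable, hcount, Fintype.card_piFinset, prod_div_distrib,
    prod_const, card_univ]
  simp [Fintype.card_prod, ← pow_mul, mul_comm]

lemma unifProb_forall_mem_row_mem (B : Finset α) (U : Finset (β → Bool)) :
    unifProb (fun ω : Cube (α × β) => ∀ t ∈ B, (fun i => ω (t, i)) ∈ U)
      = ((#U : ℝ) / 2 ^ Fintype.card β) ^ #B := by
  have hiff : ∀ ω : Cube (α × β), (∀ t ∈ B, (fun i => ω (t, i)) ∈ U) ↔
      ∀ t, (fun i => ω (t, i)) ∈ if t ∈ B then U else univ := by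
    intro ω
    refine forall_congr' fun t => ?_
    split_ifs <;> simp [*]
  have hfactor : ∀ t, (#(if t ∈ B then U else univ) : ℝ) / 2 ^ Fintype.card β
      = if t ∈ B then (#U : ℝ) / 2 ^ Fintype.card β else 1 := by
    intro t
    split_ifs <;> simp
  rw [unifProb_congr hiff, unifProb_forall_row_mem]
  simp_rw [hfactor]
  rw [prod_ite_mem, univ_inter, prod_const]

lemma card_existsUnique_eq_false :
    #(univ.filter fun y : β → Bool => ∃! i, y i = false) = Fintype.card β := by
  rw [← card_univ]
  symm
  refine card_nbij (fun i j => decide (j ≠ i)) (fun i _ => ?_) (fun i _ i' _ h => ?_)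
    (fun y hy => ?_)
  · simp
  · simpa using congrFun h i
  · obtain ⟨i, hi, huniq⟩ := (mem_filter.1 hy).2
    refine ⟨i, mem_univ _, funext fun j => ?_⟩
    by_cases hj : j = i
    · simp [hj, hi]
    · have : y j ≠ false := fun h => hj (huniq j h)
      simpa [hj] using this.symm

lemma card_not_existsUnique_eq_false_div :
    (#(univ.filter fun y : β → Bool => ¬∃! i, y i = false) : ℝ) / 2 ^ Fintype.card β
      = 1 - Fintype.card β * (1 / 2) ^ Fintype.card β := by
  have hsum := card_filter_add_card_filter_not (s := (univ : Finset (β → Bool)))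
    (fun y => ∃! i, y i = false)
  rw [card_existsUnique_eq_false, card_univ, Fintype.card_fun, Fintype.card_bool] at hsum
  have : (#(univ.filter fun y : β → Bool => ¬∃! i, y i = false) : ℝ)
      = 2 ^ Fintype.card β - Fintype.card β := by
    rw [eq_sub_iff_add_eq']; exact_mod_cast (Eq.trans (by congr!) hsum)
  rw [this, sub_div, div_self (by positivity), one_div, inv_pow, div_eq_mul_inv]

end Rows

lemma mul_one_sub_pow_div_le {p : ℝ} {k : ℕ} (hp1 : p ≤ 1) (hkp : 0 < k * p) (G : ℕ) :
    G * (1 - p) ^ (k / G) ≤ G ^ 2 / (k * p) := by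
  have hp0 : 0 ≤ p := (pos_of_mul_pos_right hkp (Nat.cast_nonneg k)).le
  rw [le_div_iff₀ hkp]
  rcases Nat.eq_zero_or_pos G with rfl | hG
  · simp
  set s := k / G
  have hbern : (1 - p) ^ s * (1 + s * p) ≤ 1 :=
    calc (1 - p) ^ s * (1 + s * p) ≤ (1 - p) ^ s * (1 + p) ^ s := by
          gcongr
          exact one_add_mul_le_pow (by linarith) s
      _ = (1 - p ^ 2) ^ s := by rw [← mul_pow]; ring
      _ ≤ 1 := pow_le_one₀ (by nlinarith) (by nlinarith)
  have hk : (k : ℝ) ≤ G * (s + 1) := by exact_mod_cast (Nat.lt_mul_div_succ k hG).le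
  have hkp : (k : ℝ) * p ≤ G * (1 + s * p) := by nlinarith
  calc G * (1 - p) ^ s * (k * p) ≤ G * (1 - p) ^ s * (G * (1 + s * p)) := by
        gcongr
    _ = G ^ 2 * ((1 - p) ^ s * (1 + s * p)) := by ring
    _ ≤ G ^ 2 := mul_le_of_le_one_right (by positivity) hbern

section Tribes

variable {k l : ℕ}

def HasConstTribe (b : Bool) (ω : Cube (Fin k × Fin l)) : Prop :=
  ∃ t, ∀ i, ω (t, i) = b

lemma HasConstTribe.mono_true {ω ω' : Cube (Fin k × Fin l)} (hle : ω ≤ ω')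
    (hω : HasConstTribe true ω) : HasConstTribe true ω' := by
  obtain ⟨t, ht⟩ := hω
  exact ⟨t, fun i => Bool.le_iff_imp.1 (hle (t, i)) (ht i)⟩

lemma HasConstTribe.anti_false {ω ω' : Cube (Fin k × Fin l)} (hle : ω ≤ ω')
    (hω' : HasConstTribe false ω') : HasConstTribe false ω := by
  obtain ⟨t, ht⟩ := hω'
  exact ⟨t, fun i => by simpa using mt (Bool.le_iff_imp.1 (hle (t, i))) (by simp [ht i])⟩

lemma unifProb_hasConstTribe (b : Bool) :
    unifProb (HasConstTribe (k := k) (l := l) b) = 1 - (1 - (1 / 2 : ℝ) ^ l) ^ k := by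
  have hiff : ∀ ω : Cube (Fin k × Fin l), ¬HasConstTribe b ω ↔
      ∀ t ∈ univ, (fun i => ω (t, i)) ∈ univ.erase fun _ => b := by
    simp [HasConstTribe, funext_iff]
  have hnot := unifProb_not fun ω : Cube (Fin k × Fin l) => ¬HasConstTribe b ω
  simp only [not_not] at hnot
  rw [hnot, unifProb_congr hiff, unifProb_forall_mem_row_mem, card_erase_of_mem (mem_univ _),
    card_univ, Fintype.card_fun, Fintype.card_bool, Fintype.card_fin, card_univ,
    Fintype.card_fin, Nat.cast_sub Nat.one_le_two_pow]
  push_cast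
  rw [sub_div, div_self (by positivity), one_div_pow]

noncomputable def tribesClamp (h : Cube (Fin k × Fin l) → Bool) (ω : Cube (Fin k × Fin l)) :
    Bool :=
  (h ω || decide (HasConstTribe true ω)) && !decide (HasConstTribe false ω)

section Clamp

variable {h : Cube (Fin k × Fin l) → Bool} {ω : Cube (Fin k × Fin l)}

lemma tribesClamp_monotone (hh : Monotone h) : Monotone (tribesClamp h) := by
  intro ω ω' hle
  simp only [tribesClamp, Bool.le_iff_imp, Bool.and_eq_true, Bool.or_eq_true, Bool.not_eq_true',
    decide_eq_true_eq, decide_eq_false_iff_not]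
  rintro ⟨hT | hT, hF⟩
  · exact ⟨Or.inl (Bool.le_iff_imp.1 (hh hle) hT), fun hF' => hF (hF'.anti_false hle)⟩
  · exact ⟨Or.inr (hT.mono_true hle), fun hF' => hF (hF'.anti_false hle)⟩

lemma tribesClamp_eq_self (hT : ¬HasConstTribe true ω) (hF : ¬HasConstTribe false ω) :
    tribesClamp h ω = h ω := by
  simp [tribesClamp, hT, hF]

lemma tribesClamp_eq_true (hT : HasConstTribe true ω) (hF : ¬HasConstTribe false ω) :
    tribesClamp h ω = true := by
  simp [tribesClamp, hT, hF]

lemma tribesClamp_eq_false (hF : HasConstTribe false ω) : tribesClamp h ω = false := by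
  simp [tribesClamp, hF]

lemma unifProb_tribesClamp_ne_le :
    unifProb (fun ω => tribesClamp h ω ≠ h ω) ≤ 2 * (1 - (1 - (1 / 2 : ℝ) ^ l) ^ k) := by
  calc unifProb (fun ω => tribesClamp h ω ≠ h ω)
      ≤ unifProb (fun ω => HasConstTribe true ω ∨ HasConstTribe false ω) :=
        unifProb_mono fun ω hne => by
          by_contra hTF
          exact hne (tribesClamp_eq_self (not_or.1 hTF).1 (not_or.1 hTF).2)
    _ ≤ unifProb (HasConstTribe true) + unifProb (HasConstTribe false) := unifProb_or_le _ _
    _ = 2 * (1 - (1 - (1 / 2 : ℝ) ^ l) ^ k) := by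
        rw [unifProb_hasConstTribe, unifProb_hasConstTribe]; ring

lemma flipAt_tribe_eq_not {t : Fin k} {i₀ : Fin l} {b : Bool}
    (hrow : ∀ i, ω (t, i) = b ↔ i = i₀) (i : Fin l) : flipAt ω (t, i₀) (t, i) = !b := by
  by_cases hi : i = i₀
  · subst hi
    rw [flipAt_self, (hrow i).2 rfl]
  · rw [flipAt_of_ne _ (by simpa using hi)]
    cases b <;> simpa using (hrow i).not.2 hi

lemma pivTribeCount_le_card_pivSet_of_eq_false (hF : ¬HasConstTribe false ω)
    (hg : tribesClamp h ω = false) : pivTribeCount k l ω ≤ #(pivSet (tribesClamp h) ω) := by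
  refine card_le_card_of_surjOn Prod.fst fun t ht => ?_
  obtain ⟨i₀, hi₀, huniq⟩ := (mem_filter.1 ht).2
  have hrow : ∀ i, ω (t, i) = false ↔ i = i₀ := fun i => ⟨huniq i, by rintro rfl; exact hi₀⟩
  refine ⟨(t, i₀), ?_, rfl⟩
  simp only [pivSet, coe_filter, Set.mem_ofPred_eq, mem_univ, true_and]
  have hT : HasConstTribe true (flipAt ω (t, i₀)) := ⟨t, flipAt_tribe_eq_not hrow⟩
  have hF' : ¬HasConstTribe false (flipAt ω (t, i₀)) := by
    rintro ⟨t', ht'⟩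
    by_cases htt : t' = t
    · subst htt
      simpa [flipAt_tribe_eq_not hrow i₀] using ht' i₀
    · exact hF ⟨t', fun i => by rw [← ht' i, flipAt_of_ne _ (by simp [htt])]⟩
  rw [hg, tribesClamp_eq_true hT hF']
  decide

lemma pivTribeCount_negCube_le_card_pivSet_of_eq_true (hg : tribesClamp h ω = true) :
    pivTribeCount k l (negCube ω) ≤ #(pivSet (tribesClamp h) ω) := by
  refine card_le_card_of_surjOn Prod.fst fun t ht => ?_
  obtain ⟨i₀, hi₀, huniq⟩ := (mem_filter.1 ht).2
  have hrow : ∀ i, ω (t, i) = true ↔ i = i₀ := fun i =>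
    ⟨fun h => huniq i (by simp [negCube, h]), by rintro rfl; simpa [negCube] using hi₀⟩
  refine ⟨(t, i₀), ?_, rfl⟩
  simp only [pivSet, coe_filter, Set.mem_ofPred_eq, mem_univ, true_and]
  rw [hg, tribesClamp_eq_false ⟨t, flipAt_tribe_eq_not hrow⟩]
  decide

lemma lt_card_pivSet_tribesClamp {a : ℕ} (hF : ¬HasConstTribe false ω)
    (hpos : a < pivTribeCount k l ω) (hneg : a < pivTribeCount k l (negCube ω)) :
    a < #(pivSet (tribesClamp h) ω) := by
  cases hg : tribesClamp h ω
  · exact hpos.trans_le (pivTribeCount_le_card_pivSet_of_eq_false hF hg)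
  · exact hneg.trans_le (pivTribeCount_negCube_le_card_pivSet_of_eq_true hg)

end Clamp

lemma exists_forall_div_eq_not_of_card_lt {P : Fin k → Prop} [DecidablePred P] {G s : ℕ}
    (hP : #(univ.filter P) < G) : ∃ g ∈ range G, ∀ t : Fin k, t.val / s = g → ¬P t := by
  by_contra! hall
  refine hP.not_ge <| (card_range G).symm.trans_le <|
    card_le_card_of_surjOn (fun t : Fin k => t.val / s) ?_
  intro g hg
  obtain ⟨t, hts, ht⟩ := hall g hg
  exact ⟨t, by simpa using ht, hts⟩

lemma le_card_filter_div_eq {G s g : ℕ} (hg : g < G) (hGs : G * s ≤ k) :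
    s ≤ #(univ.filter fun t : Fin k => t.val / s = g) := by
  refine (card_range s).symm.trans_le <|
    card_le_card_of_surjOn (fun t : Fin k => t.val - g * s) fun j hj => ?_
  have hj : j < s := by simpa using hj
  have hlt : g * s + j < k := by nlinarith
  refine ⟨⟨g * s + j, hlt⟩, ?_, by simp⟩
  simp only [coe_filter, mem_univ, true_and, Set.mem_ofPred_eq]
  rw [Nat.mul_comm, Nat.mul_add_div (by omega), Nat.div_eq_of_lt hj, add_zero]

lemma unifProb_pivTribeCount_lt_le (G : ℕ) :
    unifProb (fun ω : Cube (Fin k × Fin l) => pivTribeCount k l ω < G)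
      ≤ G * (1 - l * (1 / 2 : ℝ) ^ l) ^ (k / G) := by
  set U := univ.filter fun y : Fin l → Bool => ¬∃! i, y i = false
  have hq : (#U : ℝ) / 2 ^ l = 1 - l * (1 / 2) ^ l := by
    simpa using card_not_existsUnique_eq_false_div (β := Fin l)
  have hq1 : (#U : ℝ) / 2 ^ l ≤ 1 := by
    rw [div_le_one (by positivity)]
    exact_mod_cast (card_le_univ U).trans_eq (by simp)
  calc unifProb (fun ω : Cube (Fin k × Fin l) => pivTribeCount k l ω < G)
      ≤ unifProb (fun ω : Cube (Fin k × Fin l) => ∃ g ∈ range G,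
          ∀ t ∈ univ.filter (fun t : Fin k => t.val / (k / G) = g), (fun i => ω (t, i)) ∈ U) :=
        unifProb_mono fun ω hω => by
          obtain ⟨g, hg, hgt⟩ := exists_forall_div_eq_not_of_card_lt (s := k / G) hω
          exact ⟨g, hg, fun t ht => by simpa [U] using hgt t (by simpa using ht)⟩
    _ ≤ ∑ g ∈ range G, unifProb (fun ω : Cube (Fin k × Fin l) =>
          ∀ t ∈ univ.filter (fun t : Fin k => t.val / (k / G) = g), (fun i => ω (t, i)) ∈ U) :=
        unifProb_exists_le _ _
    _ ≤ ∑ _g ∈ range G, ((#U : ℝ) / 2 ^ l) ^ (k / G) := by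
        refine sum_le_sum fun g hg => ?_
        rw [unifProb_forall_mem_row_mem, Fintype.card_fin]
        exact pow_le_pow_of_le_one (by positivity) hq1
          (le_card_filter_div_eq (mem_range.1 hg) (Nat.mul_div_le k G))
    _ = G * (1 - l * (1 / 2 : ℝ) ^ l) ^ (k / G) := by
        rw [sum_const, card_range, nsmul_eq_mul, hq]

lemma unifProb_not_lt_card_pivSet_tribesClamp_le (h : Cube (Fin k × Fin l) → Bool) (a : ℕ)
    (hc : 0 < (k : ℝ) * l * (1 / 2) ^ l) :
    unifProb (fun ω => ¬a < #(pivSet (tribesClamp h) ω))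
      ≤ (1 - (1 - (1 / 2 : ℝ) ^ l) ^ k) + 2 * (((a + 1 : ℕ) : ℝ) ^ 2 / (k * l * (1 / 2) ^ l)) := by
  have hp1 : (l : ℝ) * (1 / 2) ^ l ≤ 1 := by
    rw [one_div_pow, mul_one_div, div_le_one (by positivity)]
    exact_mod_cast Nat.lt_two_pow_self.le
  have htail := (unifProb_pivTribeCount_lt_le (k := k) (l := l) (a + 1)).trans
    (mul_one_sub_pow_div_le hp1 (by rwa [← mul_assoc]) (a + 1))
  rw [← mul_assoc] at htail
  calc unifProb (fun ω => ¬a < #(pivSet (tribesClamp h) ω))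
      ≤ unifProb (fun ω => HasConstTribe false ω ∨ (pivTribeCount k l ω < a + 1 ∨
          pivTribeCount k l (negCube ω) < a + 1)) :=
        unifProb_mono fun ω hω => by
          by_contra hcon
          simp only [not_or, not_lt, Nat.add_one_le_iff] at hcon
          exact hω (lt_card_pivSet_tribesClamp hcon.1 hcon.2.1 hcon.2.2)
    _ ≤ unifProb (HasConstTribe false) + (unifProb (fun ω => pivTribeCount k l ω < a + 1)
          + unifProb (fun ω => pivTribeCount k l (negCube ω) < a + 1)) :=
        (unifProb_or_le _ _).trans (add_le_add le_rfl (unifProb_or_le _ _))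
    _ ≤ _ := by
        rw [unifProb_hasConstTribe, unifProb_comp_negCube fun ω => pivTribeCount k l ω < a + 1]
        linarith

end Tribes

lemma exists_tendsto_atTop_sq_div_tendsto_zero {c : ℕ → ℝ} (hc : Tendsto c atTop atTop) :
    ∃ a : ℕ → ℕ, (∀ n, 0 < a n) ∧ Tendsto a atTop atTop ∧
      Tendsto (fun n => ((a n + 1 : ℕ) : ℝ) ^ 2 / c n) atTop (nhds 0) := by
  set r : ℕ → ℕ := fun n => Nat.sqrt (Nat.sqrt ⌊c n⌋₊)
  have hsqrt : Tendsto Nat.sqrt atTop atTop :=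
    tendsto_atTop_atTop.2 fun b => ⟨b ^ 2, fun m hm => Nat.le_sqrt'.2 hm⟩
  have hr : Tendsto r atTop atTop := hsqrt.comp (hsqrt.comp (tendsto_nat_floor_atTop.comp hc))
  refine ⟨fun n => r n + 1, fun n => Nat.succ_pos _,
    tendsto_atTop_mono (fun n => Nat.le_succ _) hr, ?_⟩
  have hr2 : Tendsto (fun n => ((r n : ℝ)) ^ 2) atTop atTop :=
    (tendsto_pow_atTop two_ne_zero).comp (tendsto_natCast_atTop_atTop.comp hr)
  refine squeeze_zero' ?_ ?_ ((tendsto_const_nhds (x := (9 : ℝ))).div_atTop hr2)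
  · filter_upwards [hc.eventually_ge_atTop 0] with n hn
    exact div_nonneg (by positivity) hn
  · filter_upwards [hr.eventually_ge_atTop 1, hc.eventually_ge_atTop 0] with n hn hcn
    have hr4 : ((r n : ℝ)) ^ 4 ≤ c n := by
      have h1 : r n ^ 2 ≤ Nat.sqrt ⌊c n⌋₊ := Nat.sqrt_le' _
      have h2 : Nat.sqrt ⌊c n⌋₊ ^ 2 ≤ ⌊c n⌋₊ := Nat.sqrt_le' _
      have h3 : r n ^ 4 ≤ ⌊c n⌋₊ := by
        calc r n ^ 4 = (r n ^ 2) ^ 2 := by ring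
          _ ≤ Nat.sqrt ⌊c n⌋₊ ^ 2 := Nat.pow_le_pow_left h1 2
          _ ≤ ⌊c n⌋₊ := h2
      exact (by exact_mod_cast h3 : ((r n : ℝ)) ^ 4 ≤ ⌊c n⌋₊).trans (Nat.floor_le hcn)
    have hr1 : (1 : ℝ) ≤ r n := by exact_mod_cast hn
    have h9 : ((r n : ℝ) + 2) ^ 2 ≤ 9 * (r n : ℝ) ^ 2 := by nlinarith
    rw [div_le_div_iff₀ (by nlinarith) (by positivity)]
    push_cast
    nlinarith [mul_le_mul_of_nonneg_right h9 (sq_nonneg (r n : ℝ))]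

theorem stmt17_general (l k : ℕ → ℕ)
    (h1 : Tendsto (fun n => (1 - (1 / 2 : ℝ) ^ l n) ^ k n) atTop (nhds 1))
    (h2 : Tendsto (fun n => (k n : ℝ) * (l n : ℝ) * (1 / 2 : ℝ) ^ l n) atTop atTop)
    (h : (n : ℕ) → Cube (Fin (k n) × Fin (l n)) → Bool)
    (hmono : ∀ n, Monotone (h n)) :
    ∃ g : (n : ℕ) → Cube (Fin (k n) × Fin (l n)) → Bool,
      (∀ n, Monotone (g n)) ∧
      Tendsto (fun n =>
          unifProb (fun ω : Cube (Fin (k n) × Fin (l n)) => g n ω ≠ h n ω))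
        atTop (nhds 0) ∧
      ∃ a : ℕ → ℕ, (∀ n, 0 < a n) ∧ Tendsto a atTop atTop ∧
        Tendsto (fun n =>
            unifProb (fun ω : Cube (Fin (k n) × Fin (l n)) =>
              a n < (pivSet (g n) ω).card))
          atTop (nhds 1) := by
  have hconst : Tendsto (fun n => 1 - (1 - (1 / 2 : ℝ) ^ l n) ^ k n) atTop (nhds 0) := by
    simpa using (tendsto_const_nhds (x := (1 : ℝ))).sub h1
  obtain ⟨a, ha_pos, ha_top, ha_small⟩ := exists_tendsto_atTop_sq_div_tendsto_zero h2
  refine ⟨fun n => tribesClamp (h n), fun n => tribesClamp_monotone (hmono n), ?_,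
    a, ha_pos, ha_top, ?_⟩
  · exact squeeze_zero (fun n => unifProb_nonneg _) (fun n => unifProb_tribesClamp_ne_le)
      (by simpa using hconst.const_mul 2)
  have hbad : Tendsto (fun n => unifProb fun ω : Cube (Fin (k n) × Fin (l n)) =>
      ¬a n < #(pivSet (tribesClamp (h n)) ω)) atTop (nhds 0) := by
    have hbound : Tendsto (fun n => (1 - (1 - (1 / 2 : ℝ) ^ l n) ^ k n)
        + 2 * (((a n + 1 : ℕ) : ℝ) ^ 2 / (k n * l n * (1 / 2) ^ l n))) atTop (nhds 0) := by
      simpa using hconst.add (ha_small.const_mul 2)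
    refine squeeze_zero' (.of_forall fun n => unifProb_nonneg _) ?_ hbound
    filter_upwards [h2.eventually_gt_atTop 0] with n hc
    exact unifProb_not_lt_card_pivSet_tribesClamp_le (h n) (a n) hc
  have hgood := (tendsto_const_nhds (x := (1 : ℝ))).sub hbad
  rw [sub_zero] at hgood
  exact hgood.congr fun n => by rw [unifProb_not, sub_sub_cancel]

/-- If `(1 - 2^{-l n})^{k n} → 1` and `k n · l n · 2^{-l n} → ∞`, then any
sequence of monotone Boolean functions `h n` on `{-1,1}^{[k n]×[l n]}` is `o(1)`-close to a
sequence of monotone Boolean functions `g n` which has more than `a n` pivotals with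
probability tending to `1`, for some positive integers `a n → ∞`. -/
theorem stmt17 (l k : ℕ → ℕ) (hl : ∀ n, 0 < l n) (hk : ∀ n, 0 < k n)
    (h1 : Tendsto (fun n => (1 - (1 / 2 : ℝ) ^ l n) ^ k n) atTop (nhds 1))
    (h2 : Tendsto (fun n => (k n : ℝ) * (l n : ℝ) * (1 / 2 : ℝ) ^ l n) atTop atTop)
    (h : (n : ℕ) → Cube (Fin (k n) × Fin (l n)) → Bool)
    (hmono : ∀ n, Monotone (h n)) :
    ∃ g : (n : ℕ) → Cube (Fin (k n) × Fin (l n)) → Bool,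
      (∀ n, Monotone (g n)) ∧
      Tendsto (fun n =>
          unifProb (fun ω : Cube (Fin (k n) × Fin (l n)) => g n ω ≠ h n ω))
        atTop (nhds 0) ∧
      ∃ a : ℕ → ℕ, (∀ n, 0 < a n) ∧ Tendsto a atTop atTop ∧
        Tendsto (fun n =>
            unifProb (fun ω : Cube (Fin (k n) × Fin (l n)) =>
              a n < (pivSet (g n) ω).card))
          atTop (nhds 1) :=
  stmt17_general l k h1 h2 h hmono
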